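/- For any element f of the monoid A_G, f decomposes as f = g + h where g is a nonnegative integer combination of edge vectors of G and h is the characteristic vector of a disjoint union of odd cycles of G, where the number of such odd cycles in each connected component of G is even. -/

import Mathlib

open scoped Classical

/-- The vertex following position `i` in the cyclic order of the list `l`. -/
def cnext {V : Type*} (l : List V) (i : Fin l.length) : V :=
  l.get ⟨((i : ℕ) + 1) % l.length,
    Nat.mod_lt _ (Nat.lt_of_le_of_lt (Nat.zero_le _) i.isLt)⟩

/-- A closed walk in the graph `G` (loops allowed), given as a nonempty list of
vertices in cyclic order. -/
def IsClosedWalk {V : Type*} (G : V → V → Prop) (l : List V) : Prop :=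
  l ≠ [] ∧ ∀ i : Fin l.length, G (l.get i) (cnext l i)

/-- The image in `ℤV` of the edge `{x, y}` (a loop at `x` if `x = y`, giving `2x`). -/
def eVec {V : Type*} [DecidableEq V] (x y : V) : V → ℤ :=
  fun v => (if v = x then 1 else 0) + (if v = y then 1 else 0)

/-- The image in `ℚV` of the edge `{x, y}`. -/
def eVecQ {V : Type*} [DecidableEq V] (x y : V) : V → ℚ :=
  fun v => (if v = x then 1 else 0) + (if v = y then 1 else 0)

/-- Reachability in the graph `G` (connected components). -/
def Reach {V : Type*} (G : V → V → Prop) : V → V → Prop :=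
  Relation.ReflTransGen (fun a b => G a b ∨ G b a)

/-- The semigroup `A_G`: integer vectors that are nonnegative rational combinations of
edge vectors of `G` (and lie in the lattice spanned by the edge vectors). -/
def AGset {V : Type*} [Fintype V] [DecidableEq V] (G : V → V → Prop) : Set (V → ℤ) :=
  {f | f ∈ AddSubgroup.closure {g : V → ℤ | ∃ x y, G x y ∧ g = eVec x y} ∧
    ∃ c : V × V → ℚ, (∀ e : V × V, 0 ≤ c e) ∧ (∀ e : V × V, c e ≠ 0 → G e.1 e.2) ∧
      (fun v => (f v : ℚ)) = ∑ e : V × V, c e • eVecQ e.1 e.2}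

/-!
Among the nonnegative rational representations `f = ∑ c e • eVecQ e` choose one of minimal
support; its edge vectors are then linearly independent (conic Carathéodory). Put
`h = f - ∑ ⌊c e⌋₊ • eVec e = ∑ fract (c e) • eVecQ e` and let `T` be the support of the
fractional part. At a vertex of positive `T`-degree `d` the integer `h v` lies strictly between
`0` and `d`, so `d ≥ 2`; independence gives `#T ≤ #{v | d v ≠ 0}`, and the handshake identity
`∑ d = 2 #T` then forces `d = 2` and `h v = 1` there, while `h v = 0` elsewhere. An edge set
with all degrees in `{0, 2}` is a disjoint union of loops and cycles, and an even cycle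
`x₀ … x₂ₖ₋₁` would carry the relation `∑ (-1)ⁱ (xᵢ + xᵢ₊₁) = 0`, so every cycle is odd.
Finally `h` lies in the edge lattice, whose elements have even sum over each connected component
of `G`; that sum is the total length of the odd cycles inside the component, so there is an even
number of them.
-/

open Finset

section Caratheodory

variable {K ι M : Type*} [Field K] [LinearOrder K] [IsStrictOrderedRing K]
  [AddCommGroup M] [Module K M] [Fintype ι]

theorem exists_nonneg_repr_support_lt_of_not_linearIndependent {v : ι → M} {c : ι → K}
    (hc : ∀ i, 0 ≤ c i) (hdep : ¬ LinearIndependent K (fun i : {i // c i ≠ 0} => v i)) :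
    ∃ c' : ι → K, (∀ i, 0 ≤ c' i) ∧ (∀ i, c' i ≠ 0 → c i ≠ 0) ∧
      #{i | c' i ≠ 0} < #{i | c i ≠ 0} ∧ ∑ i, c' i • v i = ∑ i, c i • v i := by
  obtain ⟨g, hg, j, hj⟩ := Fintype.not_linearIndependent_iff.mp hdep
  obtain ⟨μ, hμ, hμj⟩ : ∃ μ : {i // c i ≠ 0} → K, ∑ i, μ i • v i = 0 ∧ 0 < μ j := by
    rcases hj.lt_or_gt with hneg | hpos
    · exact ⟨-g, by simp [neg_smul, hg], by simpa using hneg⟩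
    · exact ⟨g, hg, hpos⟩
  set lam : ι → K := fun i => if h : c i ≠ 0 then μ ⟨i, h⟩ else 0 with hlam
  have hlam_zero : ∀ i, c i = 0 → lam i = 0 := fun i hi => by simp [hlam, hi]
  have hlam_sum : ∑ i, lam i • v i = 0 := by
    rw [← Fintype.sum_subtype_add_sum_subtype (fun i => c i ≠ 0), ← hμ]
    have h0 : ∑ i : {i // ¬ c i ≠ 0}, lam i • v i = 0 :=
      Finset.sum_eq_zero fun i _ => by rw [hlam_zero i (not_not.mp i.2), zero_smul]
    rw [h0, add_zero]
    exact Finset.sum_congr rfl fun i _ => by simp [hlam, i.2]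
  obtain ⟨k, hk, hmin⟩ := Finset.exists_min_image {i | 0 < lam i} (fun i => c i / lam i)
    ⟨j, by simp [hlam, j.2, hμj]⟩
  rw [Finset.mem_filter_univ] at hk
  have hck : c k ≠ 0 := fun h => hk.ne' (hlam_zero k h)
  set t := c k / lam k
  -- the largest step along `lam` that keeps every coefficient nonnegative; it kills `c k`
  refine ⟨fun i => c i - t * lam i, fun i => ?_, fun i hi h => hi (by simp [h, hlam_zero i h]),
    ?_, ?_⟩
  · rcases lt_or_ge 0 (lam i) with hi | hi
    · have := hmin i (by simpa using hi)
      rw [le_div_iff₀ hi] at this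
      linarith
    · nlinarith [hc i, div_nonneg (hc k) hk.le]
  · apply Finset.card_lt_card
    rw [Finset.ssubset_iff_of_subset]
    · exact ⟨k, by simp [hck], by simp [t, div_mul_cancel₀ _ hk.ne']⟩
    · intro i
      simp only [Finset.mem_filter_univ]
      intro hi h
      exact hi (by simp [h, hlam_zero i h])
  · simp only [sub_smul, Finset.sum_sub_distrib, mul_smul, ← Finset.smul_sum, hlam_sum,
      smul_zero, sub_zero]

theorem exists_nonneg_repr_linearIndependent (v : ι → M) {c : ι → K} (hc : ∀ i, 0 ≤ c i) :
    ∃ c' : ι → K, (∀ i, 0 ≤ c' i) ∧ (∀ i, c' i ≠ 0 → c i ≠ 0) ∧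
      ∑ i, c' i • v i = ∑ i, c i • v i ∧
      LinearIndependent K (fun i : {i // c' i ≠ 0} => v i) := by
  induction hn : #{i | c i ≠ 0} using Nat.strong_induction_on generalizing c with
  | _ n ih =>
    by_cases hind : LinearIndependent K (fun i : {i // c i ≠ 0} => v i)
    · exact ⟨c, hc, fun _ h => h, rfl, hind⟩
    obtain ⟨c₁, hc₁, hsupp₁, hlt, hsum₁⟩ :=
      exists_nonneg_repr_support_lt_of_not_linearIndependent hc hind
    obtain ⟨c₂, hc₂, hsupp₂, hsum₂, hind₂⟩ := ih _ (hn ▸ hlt) hc₁ rfl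
    exact ⟨c₂, hc₂, fun i h => hsupp₁ i (hsupp₂ i h), hsum₂.trans hsum₁, hind₂⟩

end Caratheodory

section ClosedWalk

variable {V : Type*}

theorem cnext_eq_get_finRotate (l : List V) (i : Fin l.length) :
    cnext l i = l.get (finRotate _ i) := by
  have := i.neZero
  rw [cnext, finRotate_apply]
  congr 1
  ext
  simp [Fin.val_add]

theorem val_finRotate {n : ℕ} (i : Fin n) :
    (finRotate n i : ℕ) = if (i : ℕ) + 1 = n then 0 else (i : ℕ) + 1 := by
  have := i.neZero
  rw [finRotate_apply, Fin.val_add, Fin.val_one', Nat.add_mod_mod]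
  split_ifs with h
  · rw [h, Nat.mod_self]
  · exact Nat.mod_eq_of_lt (by omega)

theorem neg_one_pow_finRotate {R : Type*} [Ring R] {n : ℕ} (hn : Even n)
    (i : Fin n) : (-1 : R) ^ (finRotate n i : ℕ) = -(-1) ^ (i : ℕ) := by
  have := i.neZero
  rw [finRotate_apply, Fin.val_add, neg_one_pow_eq_pow_mod_two,
    Nat.mod_mod_of_dvd _ (even_iff_two_dvd.mp hn), ← neg_one_pow_eq_pow_mod_two, Fin.val_one',
    Nat.mod_eq_of_lt (by obtain ⟨k, rfl⟩ := hn; have := i.pos; omega), pow_succ, mul_neg_one]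

theorem isClosedWalk_of_isChain {R : V → V → Prop} {l : List V} (hne : l ≠ [])
    (hch : l.IsChain R) (hcl : R (l.getLast hne) (l.head hne)) : IsClosedWalk R l := by
  refine ⟨hne, fun i => ?_⟩
  have hi := i.isLt
  rw [cnext_eq_get_finRotate]
  by_cases hlast : (i : ℕ) + 1 = l.length
  · have h0 : finRotate _ i = ⟨0, by omega⟩ := Fin.ext (by rw [val_finRotate, if_pos hlast])
    rw [h0, List.get_eq_getElem, List.get_eq_getElem, ← List.head_eq_getElem hne]
    convert hcl
    rw [List.getLast_eq_getElem]
    congr 1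
    omega
  · have h1 : finRotate _ i = ⟨i + 1, by omega⟩ := Fin.ext (by rw [val_finRotate, if_neg hlast])
    rw [h1]
    exact List.isChain_iff_getElem.mp hch i (by omega)

theorem isClosedWalk_singleton {R : V → V → Prop} {v : V} (hv : R v v) : IsClosedWalk R [v] :=
  ⟨List.cons_ne_nil _ _, fun i => by simpa [cnext, Fin.fin_one_eq_zero i] using hv⟩

theorem IsClosedWalk.mono {R S : V → V → Prop} (hRS : ∀ x y, R x y → S x y) {l : List V}
    (hl : IsClosedWalk R l) : IsClosedWalk S l :=
  ⟨hl.1, fun i => hRS _ _ (hl.2 i)⟩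

theorem IsClosedWalk.exists_rel {R : V → V → Prop} {l : List V} (hl : IsClosedWalk R l)
    {x : V} (hx : x ∈ l) : ∃ y, R x y := by
  obtain ⟨i, rfl⟩ := List.get_of_mem hx
  exact ⟨_, hl.2 i⟩

theorem List.Nodup.eq_of_sym2_cnext_eq {l : List V} (hnd : l.Nodup) (h3 : 3 ≤ l.length)
    {i j : Fin l.length} (h : s(l.get i, cnext l i) = s(l.get j, cnext l j)) : i = j := by
  simp only [cnext_eq_get_finRotate, Sym2.eq_iff, hnd.get_inj_iff] at h
  rcases h with ⟨hij, -⟩ | ⟨hij, hji⟩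
  · exact hij
  · have h1 := congrArg Fin.val hij
    have h2 := congrArg Fin.val hji
    rw [val_finRotate] at h1 h2
    split_ifs at h1 h2 <;> omega

theorem SimpleGraph.Walk.IsCycle.isClosedWalk_support_tail {G : SimpleGraph V} {v : V}
    {p : G.Walk v v} (hp : p.IsCycle) : IsClosedWalk G.Adj p.tail.support :=
  isClosedWalk_of_isChain p.tail.support_ne_nil p.tail.isChain_adj_support
    (by simpa using p.adj_snd hp.not_nil)

theorem SimpleGraph.IsCycles.exists_isClosedWalk_supp [Finite V] {G : SimpleGraph V}
    (h : G.IsCycles) {c : G.ConnectedComponent} {v : V} (hv : v ∈ c.supp)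
    (hn : (G.neighborSet v).Nonempty) :
    ∃ l : List V, IsClosedWalk G.Adj l ∧ l.Nodup ∧ 3 ≤ l.length ∧ ∀ x, x ∈ l ↔ x ∈ c.supp := by
  obtain ⟨p, hp, hverts⟩ := h.exists_cycle_toSubgraph_verts_eq_connectedComponentSupp hv hn
  refine ⟨p.tail.support, hp.isClosedWalk_support_tail, hp.isPath_tail.support_nodup, ?_,
    fun x => ?_⟩
  · have := hp.three_le_length
    have := p.length_tail_add_one hp.not_nil
    simp only [SimpleGraph.Walk.length_support]
    omega
  · rw [← hverts, SimpleGraph.Walk.mem_verts_toSubgraph, ← p.cons_support_tail hp.not_nil,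
      List.mem_cons, or_iff_right_of_imp]
    rintro rfl
    exact p.tail.end_mem_support

-- Indexing by components rather than vertices makes the cycles of two vertices equal or disjoint.
theorem SimpleGraph.IsCycles.exists_cycle_lists [Finite V] {G : SimpleGraph V}
    (h : G.IsCycles) :
    ∃ L : G.ConnectedComponent → List V, ∀ v, (G.neighborSet v).Nonempty →
      let l := L (G.connectedComponentMk v)
      IsClosedWalk G.Adj l ∧ l.Nodup ∧ 3 ≤ l.length ∧
        ∀ x, x ∈ l ↔ G.connectedComponentMk x = G.connectedComponentMk v := by
  have hcomp : ∀ c : G.ConnectedComponent, ∃ l : List V, ∀ v ∈ c.supp,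
      (G.neighborSet v).Nonempty →
      IsClosedWalk G.Adj l ∧ l.Nodup ∧ 3 ≤ l.length ∧ ∀ x, x ∈ l ↔ x ∈ c.supp := by
    intro c
    by_cases hc : ∃ v ∈ c.supp, (G.neighborSet v).Nonempty
    · obtain ⟨v, hv, hn⟩ := hc
      obtain ⟨l, hl⟩ := h.exists_isClosedWalk_supp hv hn
      exact ⟨l, fun _ _ _ => hl⟩
    · exact ⟨[], fun v hv hn => (hc ⟨v, hv, hn⟩).elim⟩
  choose L hL using hcomp
  exact ⟨L, fun v hn => by
    simpa only [SimpleGraph.ConnectedComponent.mem_supp_iff] using hL _ v rfl hn⟩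

theorem Reach.symm {G : V → V → Prop} {x y : V} (h : Reach G x y) : Reach G y x := by
  induction h with
  | refl => exact .refl
  | tail _ hbc ih => exact ih.head hbc.symm

theorem IsClosedWalk.reach {G : V → V → Prop} {l : List V} (hl : IsClosedWalk G l) {x y : V}
    (hx : x ∈ l) (hy : y ∈ l) : Reach G x y := by
  have h0 : 0 < l.length := List.length_pos_iff.mpr hl.1
  have hfirst : ∀ k (hk : k < l.length), Reach G (l.get ⟨0, h0⟩) (l.get ⟨k, hk⟩) := by
    intro k
    induction k with
    | zero => exact fun _ => Relation.ReflTransGen.refl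
    | succ k ih =>
      intro hk
      have hadj := hl.2 ⟨k, by omega⟩
      rw [cnext_eq_get_finRotate, show finRotate _ ⟨k, _⟩ = ⟨k + 1, hk⟩ from
        Fin.ext (by rw [val_finRotate, if_neg (by simp; omega)])] at hadj
      exact (ih (by omega)).tail (Or.inl hadj)
  obtain ⟨i, rfl⟩ := List.get_of_mem hx
  obtain ⟨j, rfl⟩ := List.get_of_mem hy
  exact (hfirst i i.isLt).symm.trans (hfirst j j.isLt)

end ClosedWalk

section EdgeVectors

variable {V : Type*} [DecidableEq V]

def incidence (e : V × V) (v : V) : ℕ :=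
  (if v = e.1 then 1 else 0) + (if v = e.2 then 1 else 0)

def edgeDegree (T : Finset (V × V)) (v : V) : ℕ := ∑ e ∈ T, incidence e v

theorem eVecQ_comm (x y : V) : eVecQ x y = eVecQ y x := by
  funext v; simp only [eVecQ]; ring

theorem eVecQ_eq_of_sym2_eq {a b c d : V} (h : s(a, b) = s(c, d)) : eVecQ a b = eVecQ c d := by
  rcases Sym2.eq_iff.mp h with ⟨rfl, rfl⟩ | ⟨rfl, rfl⟩
  · rfl
  · exact eVecQ_comm _ _

theorem eVecQ_eq_single_add_single (x y : V) : eVecQ x y = Pi.single x 1 + Pi.single y 1 := by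
  funext v; simp [eVecQ, Pi.single_apply]

theorem eVecQ_apply (e : V × V) (v : V) : eVecQ e.1 e.2 v = incidence e v := by
  simp only [eVecQ, incidence]; push_cast; rfl

theorem eVecQ_apply_eq_cast (x y v : V) : eVecQ x y v = eVec x y v := by
  simp only [eVecQ, eVec]; push_cast; rfl

theorem sum_neg_one_pow_smul_eVecQ_cnext {l : List V} (heven : Even l.length) :
    ∑ i : Fin l.length, (-1 : ℚ) ^ (i : ℕ) • eVecQ (l.get i) (cnext l i) = 0 := by
  set σ := finRotate l.length
  have hshift : ∑ i : Fin l.length, (-1 : ℚ) ^ (i : ℕ) • Pi.single (l.get (σ i)) (1 : ℚ) =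
      -∑ i : Fin l.length, (-1 : ℚ) ^ (i : ℕ) • Pi.single (l.get i) (1 : ℚ) := by
    conv_rhs => rw [← Finset.sum_neg_distrib, ← Equiv.sum_comp σ]
    refine Finset.sum_congr rfl fun i _ => ?_
    rw [neg_one_pow_finRotate heven, neg_smul, neg_neg]
  simp only [cnext_eq_get_finRotate, eVecQ_eq_single_add_single, smul_add,
    Finset.sum_add_distrib]
  rw [hshift, add_neg_cancel]

theorem incidence_le_edgeDegree {T : Finset (V × V)} {e : V × V} (he : e ∈ T) (v : V) :
    incidence e v ≤ edgeDegree T v :=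
  Finset.single_le_sum (f := fun e => incidence e v) (fun _ _ => Nat.zero_le _) he

theorem sum_edgeDegree [Fintype V] (T : Finset (V × V)) : ∑ v, edgeDegree T v = 2 * #T := by
  simp only [edgeDegree]
  rw [Finset.sum_comm, Finset.card_eq_sum_ones, Finset.mul_sum]
  refine Finset.sum_congr rfl fun e _ => ?_
  simp [incidence, Finset.sum_add_distrib]

theorem edgeDegree_eq_card_add_card [Fintype V] (T : Finset (V × V)) (v : V) :
    edgeDegree T v = #{w | (v, w) ∈ T} + #{w | (w, v) ∈ T} := by
  simp only [edgeDegree, incidence, Finset.sum_add_distrib, Finset.sum_boole, Nat.cast_id]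
  congr 1
  · exact Finset.card_bij' (fun e _ => e.2) (fun w _ => (v, w))
      (by aesop) (by aesop) (by aesop) (by aesop)
  · exact Finset.card_bij' (fun e _ => e.1) (fun w _ => (w, v))
      (by aesop) (by aesop) (by aesop) (by aesop)

theorem card_le_card_edgeDegree_ne_zero [Fintype V] {T : Finset (V × V)}
    (hind : LinearIndependent ℚ (fun e : T => eVecQ e.1.1 e.1.2)) :
    #T ≤ #{v | edgeDegree T v ≠ 0} := by
  set S : Finset V := {v | edgeDegree T v ≠ 0}
  let π : (V → ℚ) →ₗ[ℚ] (S → ℚ) := LinearMap.funLeft ℚ ℚ Subtype.val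
  have hspan : Submodule.span ℚ (Set.range fun e : T => eVecQ e.1.1 e.1.2) ≤
      Submodule.pi (↑S)ᶜ (fun _ => ⊥) := by
    rw [Submodule.span_le]
    rintro _ ⟨⟨e, he⟩, rfl⟩ v hv
    have : incidence e v = 0 := by
      have := incidence_le_edgeDegree he v
      simp [S] at hv
      omega
    simp [eVecQ_apply, this]
  have hdisj : Disjoint (Submodule.span ℚ (Set.range fun e : T => eVecQ e.1.1 e.1.2))
      (LinearMap.ker π) := by
    rw [Submodule.disjoint_def]
    intro x hx hπx
    funext v
    by_cases hv : v ∈ S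
    · exact congrFun hπx ⟨v, hv⟩
    · exact hspan hx v hv
  simpa using (hind.map hdisj).fintype_card_le_finrank

end EdgeVectors

theorem eq_zero_or_eq_two_of_sum_le {α : Type*} [Fintype α] (d : α → ℕ)
    (h2 : ∀ a, d a ≠ 0 → 2 ≤ d a) (hsum : ∑ a, d a ≤ 2 * #{a | d a ≠ 0}) :
    ∀ a, d a = 0 ∨ d a = 2 := by
  by_contra! ⟨a, ha0, ha2⟩
  have hlt : ∑ b ∈ {b | d b ≠ 0}, 2 < ∑ b ∈ {b | d b ≠ 0}, d b :=
    Finset.sum_lt_sum (fun b hb => h2 b (Finset.mem_filter.mp hb).2)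
      ⟨a, by simp [ha0], by have := h2 a ha0; omega⟩
  rw [Finset.sum_filter_ne_zero] at hlt
  simp only [Finset.sum_const, smul_eq_mul] at hlt
  omega

section FractionalPart

variable {V : Type*} [DecidableEq V] {T : Finset (V × V)} {r : V × V → ℚ} {h : V → ℤ}

theorem eq_zero_of_edgeDegree_eq_zero (hh : ∀ v, (h v : ℚ) = ∑ e ∈ T, r e * incidence e v)
    {v : V} (hv : edgeDegree T v = 0) : h v = 0 := by
  have hinc : ∀ e ∈ T, incidence e v = 0 := Finset.sum_eq_zero_iff.mp hv
  exact_mod_cast (hh v).trans (Finset.sum_eq_zero fun e he => by simp [hinc e he])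

theorem pos_and_lt_edgeDegree (hr : ∀ e ∈ T, 0 < r e ∧ r e < 1)
    (hh : ∀ v, (h v : ℚ) = ∑ e ∈ T, r e * incidence e v)
    {v : V} (hv : edgeDegree T v ≠ 0) : 0 < h v ∧ h v < edgeDegree T v := by
  obtain ⟨e, he, hev⟩ : ∃ e ∈ T, incidence e v ≠ 0 := by
    by_contra! hno
    exact hv (Finset.sum_eq_zero hno)
  have hev' : (0 : ℚ) < incidence e v := by positivity
  constructor
  · have : (0 : ℚ) < h v := by
      rw [hh v]
      exact Finset.sum_pos' (fun e he => mul_nonneg (hr e he).1.le (Nat.cast_nonneg _))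
        ⟨e, he, mul_pos (hr e he).1 hev'⟩
    exact_mod_cast this
  · have : (h v : ℚ) < edgeDegree T v := by
      rw [hh v, edgeDegree, Nat.cast_sum]
      refine Finset.sum_lt_sum (fun e he => ?_) ⟨e, he, ?_⟩
      · exact mul_le_of_le_one_left (Nat.cast_nonneg _) (hr e he).2.le
      · exact mul_lt_of_lt_one_left hev' (hr e he).2
    exact_mod_cast this

theorem edgeDegree_eq_two_of_fract [Fintype V] (hr : ∀ e ∈ T, 0 < r e ∧ r e < 1)
    (hind : LinearIndependent ℚ (fun e : T => eVecQ e.1.1 e.1.2))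
    (hh : ∀ v, (h v : ℚ) = ∑ e ∈ T, r e * incidence e v) (v : V) :
    (edgeDegree T v = 0 ∧ h v = 0) ∨ (edgeDegree T v = 2 ∧ h v = 1) := by
  have hdeg := eq_zero_or_eq_two_of_sum_le (edgeDegree T)
    (fun v hv => by have := pos_and_lt_edgeDegree hr hh hv; omega)
    ((sum_edgeDegree T).trans_le (by have := card_le_card_edgeDegree_ne_zero hind; omega)) v
  rcases hdeg with hv | hv
  · exact Or.inl ⟨hv, eq_zero_of_edgeDegree_eq_zero hh hv⟩
  · have := pos_and_lt_edgeDegree hr hh (v := v) (by omega)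
    exact Or.inr ⟨hv, by rw [hv] at this; omega⟩

theorem cast_sub_sum_floor_smul_eVec [Fintype V] {f : V → ℤ}
    {c : V × V → ℚ} (hc : ∀ e, 0 ≤ c e)
    (hfc : (fun v => (f v : ℚ)) = ∑ e : V × V, c e • eVecQ e.1 e.2) (v : V) :
    (((f - ∑ e : V × V, (⌊c e⌋₊ : ℤ) • eVec e.1 e.2) v : ℤ) : ℚ) =
      ∑ e ∈ univ.filter (fun e => Int.fract (c e) ≠ 0), Int.fract (c e) * incidence e v := by
  have hfv := congrFun hfc v
  simp only [Finset.sum_apply, Pi.smul_apply, smul_eq_mul] at hfv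
  rw [Finset.sum_filter_of_ne fun e _ h => left_ne_zero_of_mul h]
  simp only [Pi.sub_apply, Finset.sum_apply, Pi.smul_apply, smul_eq_mul, Int.cast_sub,
    Int.cast_sum, Int.cast_mul, hfv, ← Finset.sum_sub_distrib]
  refine Finset.sum_congr rfl fun e _ => ?_
  have hsplit := Int.floor_add_fract (c e)
  rw [← natCast_floor_eq_intCast_floor (hc e)] at hsplit
  rw [← eVecQ_apply_eq_cast, eVecQ_apply, Int.cast_natCast]
  linear_combination -(incidence e v : ℚ) * hsplit

end FractionalPart

section OddCycles

variable {V : Type*} [DecidableEq V] {T : Finset (V × V)}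

-- Loops of `T` are invisible here; they are handled separately, as cycles `[v]` of length one.
abbrev edgeGraph (T : Finset (V × V)) : SimpleGraph V :=
  SimpleGraph.fromRel fun x y => (x, y) ∈ T

theorem swap_notMem_of_linearIndependent
    (hind : LinearIndependent ℚ (fun e : T => eVecQ e.1.1 e.1.2)) {x y : V} (hxy : x ≠ y)
    (h : (x, y) ∈ T) : (y, x) ∉ T := fun h' =>
  hxy (congrArg (fun e : T => e.1.1)
    (hind.injective (a₁ := ⟨_, h⟩) (a₂ := ⟨_, h'⟩) (eVecQ_comm x y)))

theorem odd_length_of_linearIndependent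
    (hind : LinearIndependent ℚ (fun e : T => eVecQ e.1.1 e.1.2)) {l : List V}
    (hl : IsClosedWalk (edgeGraph T).Adj l) (hnd : l.Nodup) (h3 : 3 ≤ l.length) :
    Odd l.length := by
  rw [← Nat.not_even_iff_odd]
  intro heven
  have hedge : ∀ i, ∃ e : V × V, e ∈ T ∧ s(e.1, e.2) = s(l.get i, cnext l i) := fun i => by
    obtain ⟨-, h | h⟩ := hl.2 i
    · exact ⟨_, h, rfl⟩
    · exact ⟨_, h, Sym2.eq_swap⟩
  choose e heT he using hedge
  let ι : Fin l.length → T := fun i => ⟨e i, heT i⟩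
  have hι : Function.Injective ι := fun i j hij =>
    hnd.eq_of_sym2_cnext_eq h3 (by
      rw [← he, ← he]
      exact congrArg (fun e : T => s(e.1.1, e.1.2)) hij)
  have hsum : ∑ i : Fin l.length, (-1 : ℚ) ^ (i : ℕ) • eVecQ (e i).1 (e i).2 = 0 := by
    simpa only [eVecQ_eq_of_sym2_eq (he _)] using sum_neg_one_pow_smul_eVecQ_cnext heven
  simpa using Fintype.linearIndependent_iff.mp (hind.comp ι hι) _ hsum ⟨0, by omega⟩

theorem not_edgeGraph_adj_of_loop [Fintype V] {v w : V} (hloop : (v, v) ∈ T)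
    (hdeg : edgeDegree T v ≤ 2) : ¬ (edgeGraph T).Adj v w := by
  rintro ⟨hvw, hw⟩
  rw [edgeDegree_eq_card_add_card] at hdeg
  have hpair : ∀ S : Finset V, v ∈ S → w ∈ S → 2 ≤ #S := fun S hv hw =>
    Finset.card_pair hvw ▸ Finset.card_le_card (Finset.insert_subset hv (by simpa using hw))
  have hA : 1 ≤ #{w | (v, w) ∈ T} := Finset.card_pos.mpr ⟨v, by simpa using hloop⟩
  have hB : 1 ≤ #{w | (w, v) ∈ T} := Finset.card_pos.mpr ⟨v, by simpa using hloop⟩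
  rcases hw with hw | hw
  · have := hpair {w | (v, w) ∈ T} (by simpa using hloop) (by simpa using hw)
    omega
  · have := hpair {w | (w, v) ∈ T} (by simpa using hloop) (by simpa using hw)
    omega

theorem ncard_neighborSet_edgeGraph [Fintype V]
    (hind : LinearIndependent ℚ (fun e : T => eVecQ e.1.1 e.1.2)) {v : V}
    (hloop : (v, v) ∉ T) : ((edgeGraph T).neighborSet v).ncard = edgeDegree T v := by
  set A : Finset V := {w | (v, w) ∈ T}
  set B : Finset V := {w | (w, v) ∈ T}
  have hset : (edgeGraph T).neighborSet v = ↑(A ∪ B) := by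
    ext w
    simp only [SimpleGraph.mem_neighborSet, SimpleGraph.fromRel_adj, A, B, Finset.coe_union,
      Finset.coe_filter, Finset.mem_univ, true_and, Set.mem_union]
    constructor
    · exact fun h => h.2
    · rintro (h | h) <;> refine ⟨fun hvw => hloop ?_, by tauto⟩ <;> rwa [← hvw] at h
  rw [hset, Set.ncard_coe_finset, Finset.card_union_of_disjoint, edgeDegree_eq_card_add_card]
  rw [Finset.disjoint_left]
  intro w hw hw'
  simp only [A, B, Finset.mem_filter, Finset.mem_univ, true_and] at hw hw'
  by_cases hvw : v = w
  · exact hloop (hvw ▸ hw)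
  · exact swap_notMem_of_linearIndependent hind hvw hw hw'

theorem isCycles_edgeGraph [Fintype V]
    (hind : LinearIndependent ℚ (fun e : T => eVecQ e.1.1 e.1.2))
    (hdeg : ∀ v, edgeDegree T v = 0 ∨ edgeDegree T v = 2) : (edgeGraph T).IsCycles := by
  rintro v ⟨w, hw⟩
  have hloop : (v, v) ∉ T := fun h =>
    not_edgeGraph_adj_of_loop h (by rcases hdeg v with h | h <;> omega) hw
  rw [ncard_neighborSet_edgeGraph hind hloop]
  have hpos := (Set.ncard_pos (Set.toFinite _)).mpr ⟨w, hw⟩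
  rw [ncard_neighborSet_edgeGraph hind hloop] at hpos
  rcases hdeg v with h | h <;> omega

theorem edgeDegree_ne_zero_of_edgeGraph_adj [Fintype V] {v w : V}
    (h : (edgeGraph T).Adj v w) : edgeDegree T v ≠ 0 := by
  rw [edgeDegree_eq_card_add_card]
  rcases h.2 with h | h
  · have : 0 < #{w | (v, w) ∈ T} := Finset.card_pos.mpr ⟨w, by simpa using h⟩
    omega
  · have : 0 < #{w | (w, v) ∈ T} := Finset.card_pos.mpr ⟨w, by simpa using h⟩
    omega

theorem exists_edgeGraph_adj [Fintype V] {v : V} (hloop : (v, v) ∉ T)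
    (hv : edgeDegree T v ≠ 0) : ∃ w, (edgeGraph T).Adj v w := by
  rw [edgeDegree_eq_card_add_card] at hv
  rcases Nat.pos_of_ne_zero hv |> Nat.add_pos_iff_pos_or_pos.mp with h | h
  · obtain ⟨w, hw⟩ := Finset.card_pos.mp h
    simp only [Finset.mem_filter, Finset.mem_univ, true_and] at hw
    exact ⟨w, fun hvw => hloop (hvw ▸ hw), Or.inl hw⟩
  · obtain ⟨w, hw⟩ := Finset.card_pos.mp h
    simp only [Finset.mem_filter, Finset.mem_univ, true_and] at hw
    exact ⟨w, fun hvw => hloop (hvw ▸ hw), Or.inr hw⟩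

theorem exists_oddCycle_decomposition [Fintype V]
    (hind : LinearIndependent ℚ (fun e : T => eVecQ e.1.1 e.1.2))
    (hdeg : ∀ v, edgeDegree T v = 0 ∨ edgeDegree T v = 2) :
    ∃ C : Finset (List V),
      (∀ l ∈ C, IsClosedWalk (fun x y => (x, y) ∈ T ∨ (y, x) ∈ T) l ∧ l.Nodup ∧ Odd l.length) ∧
      (∀ l ∈ C, ∀ l' ∈ C, l ≠ l' → ∀ v : V, ¬ (v ∈ l ∧ v ∈ l')) ∧
      (∀ v, (∃ l ∈ C, v ∈ l) ↔ edgeDegree T v ≠ 0) := by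
  set H := edgeGraph T
  obtain ⟨L, hL⟩ := (isCycles_edgeGraph hind hdeg).exists_cycle_lists
  let cyc : V → List V := fun v => if (v, v) ∈ T then [v] else L (H.connectedComponentMk v)
  have hcyc : ∀ v, (v, v) ∉ T → edgeDegree T v ≠ 0 →
      IsClosedWalk H.Adj (cyc v) ∧ (cyc v).Nodup ∧ 3 ≤ (cyc v).length ∧
        ∀ x, x ∈ cyc v ↔ H.connectedComponentMk x = H.connectedComponentMk v := by
    intro v hloop hv
    simpa only [cyc, hloop, if_false] using hL v (exists_edgeGraph_adj hloop hv)
  have hmem_self : ∀ v, edgeDegree T v ≠ 0 → v ∈ cyc v := by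
    intro v hv
    by_cases hloop : (v, v) ∈ T
    · simp [cyc, hloop]
    · exact ((hcyc v hloop hv).2.2.2 v).mpr rfl
  have hloop_mem : ∀ v w, edgeDegree T w ≠ 0 → (v, v) ∈ T → v ∈ cyc w → cyc w = cyc v := by
    intro v w hw hloop hvw
    by_cases hwl : (w, w) ∈ T
    · simp only [cyc, hwl, if_true, List.mem_singleton] at hvw
      rw [hvw]
    · obtain ⟨y, hy⟩ := (hcyc w hwl hw).1.exists_rel hvw
      exact absurd hy (not_edgeGraph_adj_of_loop hloop (by rcases hdeg v with h | h <;> omega))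
  refine ⟨(univ.filter (edgeDegree T · ≠ 0)).image cyc, ?_, ?_, fun x => ⟨?_, ?_⟩⟩
  · simp only [Finset.mem_image, Finset.mem_filter, Finset.mem_univ, true_and]
    rintro _ ⟨v, hv, rfl⟩
    by_cases hloop : (v, v) ∈ T
    · simp only [cyc, hloop, if_true]
      exact ⟨isClosedWalk_singleton (Or.inl hloop), List.nodup_singleton v, odd_one⟩
    · obtain ⟨hw, hnd, h3, -⟩ := hcyc v hloop hv
      exact ⟨hw.mono fun x y h => h.2, hnd, odd_length_of_linearIndependent hind hw hnd h3⟩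
  · simp only [Finset.mem_image, Finset.mem_filter, Finset.mem_univ, true_and]
    rintro _ ⟨v, hv, rfl⟩ _ ⟨w, hw, rfl⟩ hne x ⟨hxv, hxw⟩
    apply hne
    by_cases hvl : (v, v) ∈ T
    · simp only [cyc, hvl, if_true, List.mem_singleton] at hxv
      subst hxv
      exact (hloop_mem x w hw hvl hxw).symm
    by_cases hwl : (w, w) ∈ T
    · simp only [cyc, hwl, if_true, List.mem_singleton] at hxw
      subst hxw
      exact hloop_mem x v hv hwl hxv
    · simp only [cyc, hvl, hwl, if_false]
      rw [← ((hcyc v hvl hv).2.2.2 x).mp hxv, ← ((hcyc w hwl hw).2.2.2 x).mp hxw]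
  · simp only [Finset.mem_image, Finset.mem_filter, Finset.mem_univ, true_and]
    rintro ⟨_, ⟨v, hv, rfl⟩, hx⟩
    by_cases hloop : (v, v) ∈ T
    · simp only [cyc, hloop, if_true, List.mem_singleton] at hx
      exact hx ▸ hv
    · obtain ⟨y, hy⟩ := (hcyc v hloop hv).1.exists_rel hx
      exact edgeDegree_ne_zero_of_edgeGraph_adj hy
  · exact fun hx => ⟨cyc x, Finset.mem_image_of_mem _ (by simpa using hx), hmem_self x hx⟩

end OddCycles

section Parity

variable {V : Type*} [Fintype V] [DecidableEq V] {G : V → V → Prop}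

theorem even_sum_reach_of_mem_closure (v : V) {f : V → ℤ}
    (hf : f ∈ AddSubgroup.closure {g : V → ℤ | ∃ x y, G x y ∧ g = eVec x y}) :
    Even (∑ x ∈ univ.filter (Reach G v), f x) := by
  induction hf using AddSubgroup.closure_induction with
  | mem g hg =>
    obtain ⟨a, b, hab, rfl⟩ := hg
    have hiff : Reach G v a ↔ Reach G v b :=
      ⟨fun h => h.tail (Or.inl hab), fun h => h.tail (Or.inr hab)⟩
    simp only [eVec, Finset.sum_add_distrib, Finset.sum_ite_eq', Finset.mem_filter_univ, hiff]
    split_ifs <;> simp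
  | zero => simp
  | add f g _ _ hf hg => simpa only [Pi.add_apply, Finset.sum_add_distrib] using hf.add hg
  | neg f _ hf => simpa only [Pi.neg_apply, Finset.sum_neg_distrib] using hf.neg

theorem sum_indicator_reach {C : Finset (List V)} (hC : ∀ l ∈ C, IsClosedWalk G l ∧ l.Nodup)
    (hdisj : ∀ l ∈ C, ∀ l' ∈ C, l ≠ l' → ∀ v : V, ¬ (v ∈ l ∧ v ∈ l')) (v : V) :
    ∑ x ∈ univ.filter (Reach G v), (if ∃ l ∈ C, x ∈ l then (1 : ℤ) else 0) =
      ∑ l ∈ C.filter (fun l => ∃ x ∈ l, Reach G v x), (l.length : ℤ) := by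
  set Cv := C.filter (fun l => ∃ x ∈ l, Reach G v x)
  have hunion : (univ.filter (Reach G v)).filter (fun x => ∃ l ∈ C, x ∈ l) =
      Cv.biUnion List.toFinset := by
    ext x
    simp only [Cv, Finset.mem_filter, Finset.mem_univ, true_and, Finset.mem_biUnion,
      List.mem_toFinset]
    constructor
    · rintro ⟨hvx, l, hl, hx⟩
      exact ⟨l, ⟨hl, x, hx, hvx⟩, hx⟩
    · rintro ⟨l, ⟨hl, y, hy, hvy⟩, hx⟩
      exact ⟨hvy.trans ((hC l hl).1.reach hy hx), l, hl, hx⟩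
  rw [Finset.sum_boole, hunion, Finset.card_biUnion]
  · push_cast
    exact Finset.sum_congr rfl fun l hl =>
      by rw [List.toFinset_card_of_nodup (hC l (Finset.mem_filter.mp hl).1).2]
  · intro l hl l' hl' hne
    simp only [Function.onFun, Finset.disjoint_left, List.mem_toFinset]
    exact fun x hx hx' => hdisj l (Finset.mem_filter.mp hl).1 l' (Finset.mem_filter.mp hl').1
      hne x ⟨hx, hx'⟩

theorem even_card_filter_reach {C : Finset (List V)}
    (hC : ∀ l ∈ C, IsClosedWalk G l ∧ l.Nodup ∧ Odd l.length)
    (hdisj : ∀ l ∈ C, ∀ l' ∈ C, l ≠ l' → ∀ v : V, ¬ (v ∈ l ∧ v ∈ l'))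
    (hmem : (fun v => if ∃ l ∈ C, v ∈ l then 1 else 0) ∈
      AddSubgroup.closure {g : V → ℤ | ∃ x y, G x y ∧ g = eVec x y}) (v : V) :
    Even (C.filter (fun l => ∃ x ∈ l, Reach G v x)).card := by
  have h := even_sum_reach_of_mem_closure v hmem
  rw [sum_indicator_reach (fun l hl => ⟨(hC l hl).1, (hC l hl).2.1⟩) hdisj v] at h
  have h' : Even (∑ l ∈ C.filter (fun l => ∃ x ∈ l, Reach G v x), l.length) := by
    exact_mod_cast h
  rwa [Finset.even_sum_iff_even_card_odd, Finset.filter_true_of_mem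
    fun l hl => (hC l (Finset.mem_filter.mp hl).1).2.2] at h'

end Parity

section Decomposition

variable {V : Type*} [Fintype V] [DecidableEq V] {G : V → V → Prop}

theorem sum_nsmul_eVec_mem_closure {m : V × V → ℕ} (hm : ∀ e, m e ≠ 0 → G e.1 e.2) :
    ∑ e : V × V, (m e : ℤ) • eVec e.1 e.2 ∈
      AddSubgroup.closure {g : V → ℤ | ∃ x y, G x y ∧ g = eVec x y} := by
  refine sum_mem fun e _ => ?_
  by_cases he : m e = 0
  · simp [he]
  · have hgen : eVec e.1 e.2 ∈ {g : V → ℤ | ∃ x y, G x y ∧ g = eVec x y} :=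
      ⟨e.1, e.2, hm e he, rfl⟩
    exact zsmul_mem (AddSubgroup.subset_closure hgen) _

theorem exists_oddCycles_eq_sub_sum_floor (hG : Symmetric G) {f : V → ℤ} {c : V × V → ℚ}
    (hc : ∀ e, 0 ≤ c e) (hcG : ∀ e, c e ≠ 0 → G e.1 e.2)
    (hind : LinearIndependent ℚ (fun e : {e // c e ≠ 0} => eVecQ e.1.1 e.1.2))
    (hfc : (fun v => (f v : ℚ)) = ∑ e : V × V, c e • eVecQ e.1 e.2) :
    ∃ C : Finset (List V),
      (∀ l ∈ C, IsClosedWalk G l ∧ l.Nodup ∧ Odd l.length) ∧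
      (∀ l ∈ C, ∀ l' ∈ C, l ≠ l' → ∀ v : V, ¬ (v ∈ l ∧ v ∈ l')) ∧
      f - ∑ e : V × V, (⌊c e⌋₊ : ℤ) • eVec e.1 e.2 =
        fun v => if ∃ l ∈ C, v ∈ l then 1 else 0 := by
  set T : Finset (V × V) := univ.filter fun e => Int.fract (c e) ≠ 0
  have hTc : ∀ e ∈ T, c e ≠ 0 := fun e he hce => by simp [T, hce] at he
  have hindT : LinearIndependent ℚ (fun e : T => eVecQ e.1.1 e.1.2) :=
    hind.comp (fun e : T => (⟨e.1, hTc e.1 e.2⟩ : {e // c e ≠ 0}))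
      fun e e' h => Subtype.ext (Subtype.mk.inj h)
  have hvals := edgeDegree_eq_two_of_fract
    (fun e he => ⟨(Int.fract_nonneg _).lt_of_ne' (by simpa [T] using he), Int.fract_lt_one _⟩)
    hindT (cast_sub_sum_floor_smul_eVec hc hfc)
  obtain ⟨C, hCwalk, hCdisj, hCcover⟩ :=
    exists_oddCycle_decomposition hindT fun v => (hvals v).imp And.left And.left
  have hTG : ∀ x y, (x, y) ∈ T ∨ (y, x) ∈ T → G x y := fun x y hxy =>
    hxy.elim (hcG _ <| hTc _ ·) fun h => hG (hcG _ (hTc _ h))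
  refine ⟨C, fun l hl => ⟨(hCwalk l hl).1.mono hTG, (hCwalk l hl).2⟩, hCdisj, funext fun v => ?_⟩
  rw [if_congr (hCcover v) rfl rfl]
  rcases hvals v with ⟨hv, hhv⟩ | ⟨hv, hhv⟩
  · rw [hv, if_neg (by decide)]
    exact hhv
  · rw [hv, if_pos (by decide)]
    exact hhv

end Decomposition

/-- Every `f ∈ A_G` decomposes as `f = g + h` with `g` a nonnegative integer
combination of edge vectors and `h` the characteristic vector of a disjoint union of
odd cycles of `G`, with an even number of these cycles in each connected component. -/
theorem stmt11 {V : Type*} [Fintype V] [DecidableEq V] (G : V → V → Prop)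
    (hG : Symmetric G) (f : V → ℤ) (hf : f ∈ AGset G) :
    ∃ (m : V × V → ℕ) (C : Finset (List V)),
      (∀ e : V × V, m e ≠ 0 → G e.1 e.2) ∧
      (∀ l ∈ C, IsClosedWalk G l ∧ l.Nodup ∧ Odd l.length) ∧
      (∀ l ∈ C, ∀ l' ∈ C, l ≠ l' → ∀ v : V, ¬ (v ∈ l ∧ v ∈ l')) ∧
      (∀ v : V, Even ((C.filter (fun l => ∃ x ∈ l, Reach G v x)).card)) ∧
      f = (∑ e : V × V, (m e : ℤ) • eVec e.1 e.2) +
        (fun v => if ∃ l ∈ C, v ∈ l then 1 else 0) := by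
  obtain ⟨hlat, c₀, hc₀, hc₀G, hfc₀⟩ := hf
  obtain ⟨c, hc, hcc₀, hsum, hind⟩ :=
    exists_nonneg_repr_linearIndependent (fun e : V × V => eVecQ e.1 e.2) hc₀
  have hcG : ∀ e, c e ≠ 0 → G e.1 e.2 := fun e he => hc₀G e (hcc₀ e he)
  obtain ⟨C, hC, hCdisj, hfC⟩ :=
    exists_oddCycles_eq_sub_sum_floor hG hc hcG hind (hfc₀.trans hsum.symm)
  have hmG : ∀ e : V × V, ⌊c e⌋₊ ≠ 0 → G e.1 e.2 :=
    fun e he => hcG e fun hce => he (by simp [hce])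
  refine ⟨fun e => ⌊c e⌋₊, C, hmG, hC, hCdisj, fun v => ?_, by rw [← hfC, add_sub_cancel]⟩
  exact even_card_filter_reach hC hCdisj (hfC ▸ sub_mem hlat (sum_nsmul_eVec_mem_closure hmG)) v
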